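/- arXiv:2301.04605 — 2 statements merged into one kernel-verified Lean document; each statement's English description precedes it below -/
import Mathlib

section
/- Let d ≥ 2, M ≥ 1, B = [0,1]^d, and let K : ℝ → ℂ be continuous with real part K_R and imaginary part K_I. Let f ∈ H_{K,M}(B) be real-valued, with representing function F ∈ L²([−M,M]^d) ∩ L¹([−M,M]^d) satisfying f(x) = ∫_{[−M,M]^d} F(ω) K(ω·x) dω for all x ∈ B, and set C_F = ∫_{[−M,M]^d} |F(ω)| dω, assumed positive. Then f belongs to the closure, in L²(B), of the convex hull of the set Q_{K,M} = { x ↦ γ·(cos(β)·K_R(ω·x) − sin(β)·K_I(ω·x)) : γ ∈ ℝ with |γ| ≤ C_F, β ∈ ℝ, ω ∈ [−M,M]^d }. -/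
open Finset MeasureTheory

noncomputable section BandAux

/-- clamp onto the cube -/
def bandClamp (d : ℕ) : C(Fin d → ℝ, ↥(Set.Icc (0 : Fin d → ℝ) 1)) :=
  ⟨fun x => ⟨fun i => max 0 (min 1 (x i)), by
      constructor
      · intro i; exact le_max_left _ _
      · intro i; exact max_le zero_le_one (min_le_left _ _)⟩, by
    apply Continuous.subtype_mk
    exact continuous_pi fun i => continuous_const.max (continuous_const.min (continuous_apply i))⟩

lemma bandClamp_eq_self (d : ℕ) {x : Fin d → ℝ} (hx : x ∈ Set.Icc (0 : Fin d → ℝ) 1) :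
    ((bandClamp d x : Fin d → ℝ)) = x := by
  funext i
  have h0 : (0:ℝ) ≤ x i := hx.1 i
  have h1 : x i ≤ (1:ℝ) := hx.2 i
  simp only [bandClamp, ContinuousMap.coe_mk]
  rw [min_eq_right h1, max_eq_right h0]

/-- the basic continuous kernel expression, as a jointly continuous map -/
def bandCM (d : ℕ) (K : ℝ → ℂ) (hK : Continuous K) (c : ℝ) :
    C((ℝ × (Fin d → ℝ)) × ↥(Set.Icc (0 : Fin d → ℝ) 1), ℝ) :=
  ⟨fun pz => c * (Real.cos pz.1.1 * (K (∑ i, pz.1.2 i * (pz.2 : Fin d → ℝ) i)).re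
      - Real.sin pz.1.1 * (K (∑ i, pz.1.2 i * (pz.2 : Fin d → ℝ) i)).im), by
    have hsum : Continuous fun pz : (ℝ × (Fin d → ℝ)) × ↥(Set.Icc (0 : Fin d → ℝ) 1) =>
        ∑ i, pz.1.2 i * (pz.2 : Fin d → ℝ) i := by
      apply continuous_finset_sum
      intro i _
      exact ((continuous_apply i).comp (continuous_snd.comp continuous_fst)).mul
        ((continuous_apply i).comp (continuous_subtype_val.comp continuous_snd))
    have hKc : Continuous fun pz : (ℝ × (Fin d → ℝ)) × ↥(Set.Icc (0 : Fin d → ℝ) 1) =>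
        K (∑ i, pz.1.2 i * (pz.2 : Fin d → ℝ) i) := hK.comp hsum
    exact continuous_const.mul
      (((Real.continuous_cos.comp (continuous_fst.comp continuous_fst)).mul
          (Complex.continuous_re.comp hKc)).sub
        ((Real.continuous_sin.comp (continuous_fst.comp continuous_fst)).mul
          (Complex.continuous_im.comp hKc)))⟩

end BandAux

lemma Lp_coeFn_sum {α : Type*} [MeasurableSpace α] {μ : MeasureTheory.Measure α}
    {p : ENNReal} {ι : Type*} (s : Finset ι) (g : ι → MeasureTheory.Lp ℝ p μ) :
    ⇑(∑ i ∈ s, g i) =ᵐ[μ] fun x => ∑ i ∈ s, g i x := by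
  classical
  induction s using Finset.induction_on with
  | empty => simp only [Finset.sum_empty]; exact MeasureTheory.Lp.coeFn_zero ℝ p μ
  | @insert a s ha ih =>
    have h1 := MeasureTheory.Lp.coeFn_add (g a) (∑ i ∈ s, g i)
    filter_upwards [h1, ih] with x hx1 hx2
    rw [Finset.sum_insert ha, hx1, Pi.add_apply, hx2, Finset.sum_insert ha]

open scoped BoundedContinuousFunction ENNReal NNReal

/-- A real-valued generalized bandlimited function `f ∈ H_{K,M}(B)` with representing
function `F ∈ L¹ ∩ L²([-M,M]^d)` lies in the `L²(B)`-closure of the convex hull of the set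
`Q_{K,M} = {x ↦ γ (cos β · K_R(ω·x) - sin β · K_I(ω·x)) : |γ| ≤ C_F, β ∈ ℝ, ω ∈ [-M,M]^d}`,
i.e. for every `ε > 0` some finite convex combination of elements of `Q_{K,M}` is
`ε`-close to `f` in `L²(B)`. -/
theorem bandlimited_mem_closure_convexHull
    (d : ℕ) (hd : 2 ≤ d) (M : ℝ) (hM : 1 ≤ M)
    (K : ℝ → ℂ) (hK : Continuous K)
    (f : (Fin d → ℝ) → ℝ) (F : (Fin d → ℝ) → ℂ)
    (hF2 : MemLp F 2 (volume.restrict (Set.Icc (fun _ : Fin d => -M) (fun _ => M))))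
    (hF1 : Integrable F (volume.restrict (Set.Icc (fun _ : Fin d => -M) (fun _ => M))))
    (hrep : ∀ x ∈ Set.Icc (0 : Fin d → ℝ) 1,
      (f x : ℂ) = ∫ ω in Set.Icc (fun _ : Fin d => -M) (fun _ => M),
        F ω * K (∑ i, ω i * x i))
    (C_F : ℝ)
    (hCF : C_F = ∫ ω in Set.Icc (fun _ : Fin d => -M) (fun _ => M), ‖F ω‖)
    (hCFpos : 0 < C_F) :
    ∀ ε : ℝ, 0 < ε →
      ∃ (m : ℕ) (γ β : Fin m → ℝ) (ω : Fin m → Fin d → ℝ) (lam : Fin m → ℝ),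
        (∀ j, |γ j| ≤ C_F) ∧
        (∀ j, ω j ∈ Set.Icc (fun _ : Fin d => -M) (fun _ => M)) ∧
        (∀ j, 0 ≤ lam j) ∧ (∑ j, lam j) = 1 ∧
        eLpNorm (fun x : Fin d → ℝ => f x -
            ∑ j, lam j * (γ j *
              (Real.cos (β j) * (K (∑ i, ω j i * x i)).re
                - Real.sin (β j) * (K (∑ i, ω j i * x i)).im))) 2
          (volume.restrict (Set.Icc (0 : Fin d → ℝ) 1)) ≤ ENNReal.ofReal ε := by
  intro ε hε
  classical
  haveI hfact : Fact ((1:ℝ≥0∞) ≤ 2) := ⟨one_le_two⟩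
  set Ω : Set (Fin d → ℝ) := Set.Icc (fun _ => -M) (fun _ => M) with hΩdef
  set Bs : Set (Fin d → ℝ) := Set.Icc 0 1 with hBdef
  set ν : Measure (Fin d → ℝ) := volume.restrict Ω with hνdef
  set μB : Measure (Fin d → ℝ) := volume.restrict Bs with hμBdef
  haveI hμBfin : IsFiniteMeasure μB :=
    ⟨by rw [hμBdef, Measure.restrict_apply_univ]; exact isCompact_Icc.measure_lt_top⟩
  haveI hνfin : IsFiniteMeasure ν :=
    ⟨by rw [hνdef, Measure.restrict_apply_univ]; exact isCompact_Icc.measure_lt_top⟩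
  haveI hcpt : CompactSpace ↥Bs := isCompact_iff_compactSpace.mp isCompact_Icc
  obtain ⟨F', hF'sm, hFF'⟩ : ∃ F' : (Fin d → ℝ) → ℂ, StronglyMeasurable F' ∧ F =ᵐ[ν] F' :=
    ⟨hF1.aestronglyMeasurable.mk F, hF1.aestronglyMeasurable.stronglyMeasurable_mk,
      hF1.aestronglyMeasurable.ae_eq_mk⟩
  have hF'm : Measurable F' := hF'sm.measurable
  obtain ⟨CK, hCK0, hCK⟩ : ∃ CK : ℝ, 0 ≤ CK ∧ ∀ t : ℝ, |t| ≤ d * M → ‖K t‖ ≤ CK := by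
    obtain ⟨C, hC⟩ := (isCompact_Icc (a := -(d * M : ℝ))
      (b := (d * M : ℝ))).exists_bound_of_continuousOn hK.continuousOn
    refine ⟨max C 0, le_max_right _ _, fun t ht => ?_⟩
    have : t ∈ Set.Icc (-(d * M : ℝ)) (d * M : ℝ) := by
      rcases abs_le.mp ht with ⟨h1, h2⟩; exact ⟨h1, h2⟩
    exact le_trans (hC t this) (le_max_left _ _)
  have hM0 : (0:ℝ) ≤ M := le_trans zero_le_one hM
  have hsumB : ∀ ω ∈ Ω, ∀ x ∈ Bs, |∑ i, ω i * x i| ≤ d * M := by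
    intro ω hω x hx
    calc |∑ i, ω i * x i| ≤ ∑ i, |ω i * x i| := Finset.abs_sum_le_sum_abs _ _
      _ ≤ ∑ _i : Fin d, M := by
          refine Finset.sum_le_sum fun i _ => ?_
          have h1 : |ω i| ≤ M := abs_le.mpr ⟨hω.1 i, hω.2 i⟩
          have h2 : |x i| ≤ 1 := abs_le.mpr ⟨le_trans (by norm_num) (hx.1 i), hx.2 i⟩
          calc |ω i * x i| = |ω i| * |x i| := abs_mul _ _
            _ ≤ M * 1 := mul_le_mul h1 h2 (abs_nonneg _) hM0
            _ = M := mul_one M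
      _ = d * M := by
          rw [Finset.sum_const, Finset.card_univ, Fintype.card_fin, nsmul_eq_mul]
  have hqbound : ∀ (c β : ℝ) (ω : Fin d → ℝ), ω ∈ Ω → ∀ x ∈ Bs,
      |c * (Real.cos β * (K (∑ i, ω i * x i)).re - Real.sin β * (K (∑ i, ω i * x i)).im)|
        ≤ |c| * (2 * CK) := by
    intro c β ω hω x hx
    have ht := hsumB ω hω x hx
    have hKn : ‖K (∑ i, ω i * x i)‖ ≤ CK := hCK _ ht
    have hre : |(K (∑ i, ω i * x i)).re| ≤ CK :=
      le_trans (Complex.abs_re_le_norm _) hKn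
    have him : |(K (∑ i, ω i * x i)).im| ≤ CK :=
      le_trans (Complex.abs_im_le_norm _) hKn
    have hcos : |Real.cos β| ≤ 1 := Real.abs_cos_le_one β
    have hsin : |Real.sin β| ≤ 1 := Real.abs_sin_le_one β
    rw [abs_mul]
    refine mul_le_mul_of_nonneg_left ?_ (abs_nonneg c)
    calc |Real.cos β * (K (∑ i, ω i * x i)).re - Real.sin β * (K (∑ i, ω i * x i)).im|
        ≤ |Real.cos β * (K (∑ i, ω i * x i)).re| + |Real.sin β * (K (∑ i, ω i * x i)).im| :=
          abs_sub _ _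
      _ ≤ 1 * CK + 1 * CK := by
          rw [abs_mul, abs_mul]
          exact add_le_add (mul_le_mul hcos hre (abs_nonneg _) zero_le_one)
            (mul_le_mul hsin him (abs_nonneg _) zero_le_one)
      _ = 2 * CK := by ring
  let toL : ((Fin d → ℝ) →ᵇ ℝ) →L[ℝ] Lp ℝ 2 μB := BoundedContinuousFunction.toLp 2 μB ℝ
  let iso := ContinuousMap.linearIsometryBoundedOfCompact (↥Bs) ℝ ℝ
  let h : ℝ × (Fin d → ℝ) → Lp ℝ 2 μB := fun p =>
    toL ((iso ((bandCM d K hK C_F).curry p)).compContinuous (bandClamp d))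
  have hcont_h : Continuous h :=
    toL.continuous.comp
      ((BoundedContinuousFunction.continuous_compContinuous (bandClamp d)).comp
        (iso.continuous.comp ((bandCM d K hK C_F).curry).continuous))
  have hcoe_h : ∀ p : ℝ × (Fin d → ℝ), ⇑(h p) =ᵐ[μB] fun x =>
      C_F * (Real.cos p.1 * (K (∑ i, p.2 i * x i)).re
        - Real.sin p.1 * (K (∑ i, p.2 i * x i)).im) := by
    intro p
    filter_upwards [BoundedContinuousFunction.coeFn_toLp 2 μB ℝ
      ((iso ((bandCM d K hK C_F).curry p)).compContinuous (bandClamp d)),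
      ae_restrict_mem measurableSet_Icc] with x hx hxB
    rw [show h p = toL ((iso ((bandCM d K hK C_F).curry p)).compContinuous (bandClamp d))
      from rfl] at *
    rw [hx]
    rw [BoundedContinuousFunction.compContinuous_apply]
    have : ∀ y : ↥Bs, iso ((bandCM d K hK C_F).curry p) y = bandCM d K hK C_F (p, y) := by
      intro y; rfl
    rw [this]
    show C_F * (Real.cos p.1 * (K (∑ i, p.2 i * ((bandClamp d x : Fin d → ℝ)) i)).re
      - Real.sin p.1 * (K (∑ i, p.2 i * ((bandClamp d x : Fin d → ℝ)) i)).im) = _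
    rw [bandClamp_eq_self d hxB]
  have hBS0 : (0:ℝ) ≤ C_F * (2 * CK) := by positivity
  have hnorm_h : ∀ p : ℝ × (Fin d → ℝ), p.2 ∈ Ω → ‖h p‖ ≤ ‖toL‖ * (C_F * (2 * CK)) := by
    intro p hp
    refine le_trans (toL.le_opNorm _) (mul_le_mul_of_nonneg_left ?_ (norm_nonneg toL))
    refine le_trans (BoundedContinuousFunction.norm_compContinuous_le _ _) ?_
    rw [iso.norm_map]
    rw [ContinuousMap.norm_le _ hBS0]
    intro y
    have := hqbound C_F p.1 p.2 hp y.1 y.2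
    rw [Real.norm_eq_abs]
    calc |((bandCM d K hK C_F).curry p) y| = |bandCM d K hK C_F (p, y)| := rfl
      _ ≤ |C_F| * (2 * CK) := this
      _ = C_F * (2 * CK) := by rw [abs_of_pos hCFpos]
  set μF : Measure (Fin d → ℝ) := ν.withDensity (fun ω => ENNReal.ofReal (‖F' ω‖ / C_F))
    with hμFdef
  have hμFac : μF ≪ ν := withDensity_absolutelyContinuous _ _
  have hF'int : Integrable F' ν := hF1.congr hFF'
  haveI hprob : IsProbabilityMeasure μF := by
    constructor
    rw [hμFdef, withDensity_apply _ MeasurableSet.univ, Measure.restrict_univ]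
    have hFi' : Integrable (fun ω => ‖F' ω‖ / C_F) ν := hF'int.norm.div_const _
    rw [← ofReal_integral_eq_lintegral_ofReal hFi'
      (Filter.Eventually.of_forall fun ω => by positivity)]
    have hnormeq : ∫ ω, ‖F' ω‖ ∂ν = C_F := by
      rw [hCF]
      exact integral_congr_ae ((hFF'.fun_comp norm).symm)
    rw [integral_div, hnormeq, div_self hCFpos.ne']
    simp
  have hΩae : ∀ᵐ ω ∂μF, ω ∈ Ω :=
    (ae_restrict_mem measurableSet_Icc).filter_mono hμFac.ae_le
  set Φ : (Fin d → ℝ) → Lp ℝ 2 μB := fun ω => h (Complex.arg (F' ω), ω) with hΦdef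
  have hΦsm : StronglyMeasurable Φ :=
    hcont_h.comp_stronglyMeasurable
      (((Complex.measurable_arg.comp hF'm).prodMk measurable_id).stronglyMeasurable)
  have hΦint : Integrable Φ μF := by
    refine Integrable.mono' (integrable_const (‖toL‖ * (C_F * (2 * CK))))
      hΦsm.aestronglyMeasurable ?_
    filter_upwards [hΩae] with ω hω
    exact hnorm_h _ hω
  set Q : (Fin d → ℝ) → (Fin d → ℝ) → ℝ := fun ω x =>
    C_F * (Real.cos (Complex.arg (F' ω)) * (K (∑ i, ω i * x i)).re
      - Real.sin (Complex.arg (F' ω)) * (K (∑ i, ω i * x i)).im) with hQdef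
  have hQsm : StronglyMeasurable (Function.uncurry Q) := by
    apply Measurable.stronglyMeasurable
    have hKm : Measurable fun z : (Fin d → ℝ) × (Fin d → ℝ) => K (∑ i, z.1 i * z.2 i) :=
      hK.measurable.comp (Finset.measurable_sum _ fun i _ =>
        ((measurable_pi_apply i).comp measurable_fst).mul
          ((measurable_pi_apply i).comp measurable_snd))
    have harg : Measurable fun z : (Fin d → ℝ) × (Fin d → ℝ) => Complex.arg (F' z.1) :=
      Complex.measurable_arg.comp (hF'm.comp measurable_fst)
    exact measurable_const.mul
      (((Real.measurable_cos.comp harg).mul (Complex.measurable_re.comp hKm)).sub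
        ((Real.measurable_sin.comp harg).mul (Complex.measurable_im.comp hKm)))
  have hΦcoe : ∀ ω, ⇑(Φ ω) =ᵐ[μB] Q ω := fun ω => hcoe_h (Complex.arg (F' ω), ω)
  have hkey : ∀ x ∈ Bs, ∫ ω, Q ω x ∂μF = f x := by
    intro x hx
    have hxc : Continuous fun ω : Fin d → ℝ => ∑ i, ω i * x i :=
      continuous_finset_sum _ fun i _ => (continuous_apply i).mul continuous_const
    have hmeas : Measurable fun ω => Real.toNNReal (‖F' ω‖ / C_F) :=
      (hF'm.norm.div_const _).real_toNNReal
    have hμFd : μF = ν.withDensity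
        (fun ω => ((Real.toNNReal (‖F' ω‖ / C_F) : ℝ≥0) : ℝ≥0∞)) := hμFdef
    rw [hμFd, integral_withDensity_eq_integral_smul hmeas]
    have hpt : ∀ ω, Real.toNNReal (‖F' ω‖ / C_F) • Q ω x
        = (F' ω * K (∑ i, ω i * x i)).re := by
      intro ω
      rw [NNReal.smul_def, smul_eq_mul,
        Real.coe_toNNReal _ (div_nonneg (norm_nonneg _) hCFpos.le)]
      show ‖F' ω‖ / C_F * (C_F * (Real.cos (Complex.arg (F' ω)) * (K (∑ i, ω i * x i)).re
        - Real.sin (Complex.arg (F' ω)) * (K (∑ i, ω i * x i)).im)) = _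
      have e1 : ‖F' ω‖ / C_F * (C_F * (Real.cos (Complex.arg (F' ω)) * (K (∑ i, ω i * x i)).re
          - Real.sin (Complex.arg (F' ω)) * (K (∑ i, ω i * x i)).im))
          = ‖F' ω‖ * (Real.cos (Complex.arg (F' ω)) * (K (∑ i, ω i * x i)).re
          - Real.sin (Complex.arg (F' ω)) * (K (∑ i, ω i * x i)).im) := by
        field_simp
      rw [e1, mul_sub, ← mul_assoc, ← mul_assoc,
        Complex.norm_mul_cos_arg, Complex.norm_mul_sin_arg]
      exact (Complex.mul_re _ _).symm
    simp only [hpt]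
    have hcong : (fun ω => (F' ω * K (∑ i, ω i * x i)).re)
        =ᵐ[ν] (fun ω => (F ω * K (∑ i, ω i * x i)).re) :=
      hFF'.mono fun ω hω => by simp only [hω]
    rw [integral_congr_ae hcong]
    have hint : Integrable (fun ω => F ω * K (∑ i, ω i * x i)) ν := by
      refine Integrable.mono' (hF1.norm.const_mul CK)
        (hF1.aestronglyMeasurable.mul (hK.comp hxc).aestronglyMeasurable) ?_
      filter_upwards [ae_restrict_mem measurableSet_Icc] with ω hω
      rw [norm_mul]
      calc ‖F ω‖ * ‖K (∑ i, ω i * x i)‖ ≤ ‖F ω‖ * CK :=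
            mul_le_mul_of_nonneg_left (hCK _ (hsumB ω hω x hx)) (norm_nonneg _)
        _ = CK * ‖F ω‖ := mul_comm _ _
    rw [show ∫ ω, (F ω * K (∑ i, ω i * x i)).re ∂ν
        = (∫ ω, F ω * K (∑ i, ω i * x i) ∂ν).re by simpa using integral_re hint]
    rw [← hrep x hx, Complex.ofReal_re]
  have hGsm : StronglyMeasurable fun y => ∫ ω, Q ω y ∂μF :=
    (hQsm.comp_measurable measurable_swap).integral_prod_right'
  have hfae : f =ᵐ[μB] fun y => ∫ ω, Q ω y ∂μF :=
    (ae_restrict_mem measurableSet_Icc).mono fun y hy => (hkey y hy).symm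
  have hQb : ∀ y ∈ Bs, ∀ᵐ ω ∂μF, ‖Q ω y‖ ≤ C_F * (2 * CK) := by
    intro y hy
    filter_upwards [hΩae] with ω hω
    rw [Real.norm_eq_abs]
    calc |Q ω y| ≤ |C_F| * (2 * CK) := hqbound C_F _ ω hω y hy
      _ = C_F * (2 * CK) := by rw [abs_of_pos hCFpos]
  have hfmem : MemLp f 2 μB := by
    refine MemLp.of_bound (hGsm.aestronglyMeasurable.congr hfae.symm) (C_F * (2 * CK)) ?_
    filter_upwards [ae_restrict_mem measurableSet_Icc] with y hy
    rw [Real.norm_eq_abs, ← hkey y hy]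
    calc |∫ ω, Q ω y ∂μF| ≤ (C_F * (2 * CK)) * (μF Set.univ).toReal :=
          norm_integral_le_of_norm_le_const (hQb y hy)
      _ = C_F * (2 * CK) := by rw [measure_univ]; simp
  have hIeq : ∫ ω, Φ ω ∂μF = hfmem.toLp f := by
    apply ext_inner_left ℝ
    intro g
    have hgI : Integrable (⇑g) μB := (Lp.memLp g).integrable one_le_two
    have hinner : ∀ ω, (inner ℝ g (Φ ω) : ℝ) = ∫ y, g y * Q ω y ∂μB := by
      intro ω
      rw [L2.inner_def]
      simp only [RCLike.inner_apply', starRingEnd_apply, star_trivial]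
      exact integral_congr_ae ((hΦcoe ω).mono fun y hy => by simp only [hy])
    have hswap : Integrable (Function.uncurry fun ω y => g y * Q ω y) (μF.prod μB) := by
      have hz1 : ∀ᵐ z : (Fin d → ℝ) × (Fin d → ℝ) ∂(μF.prod μB), z.1 ∈ Ω :=
        Measure.quasiMeasurePreserving_fst.ae hΩae
      have hz2 : ∀ᵐ z : (Fin d → ℝ) × (Fin d → ℝ) ∂(μF.prod μB), z.2 ∈ Bs :=
        Measure.quasiMeasurePreserving_snd.ae (ae_restrict_mem measurableSet_Icc)
      have hsm : AEStronglyMeasurable (Function.uncurry fun ω y => g y * Q ω y)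
          (μF.prod μB) := by
        have h1 : AEStronglyMeasurable (fun z : (Fin d → ℝ) × (Fin d → ℝ) => g z.2)
            (μF.prod μB) :=
          (Lp.aestronglyMeasurable g).comp_quasiMeasurePreserving
            Measure.quasiMeasurePreserving_snd
        exact h1.mul hQsm.aestronglyMeasurable
      refine Integrable.mono'
        (Integrable.mul_prod (integrable_const (C_F * (2 * CK))) hgI.norm) hsm ?_
      filter_upwards [hz1, hz2] with z h1 h2
      rw [Function.uncurry, norm_mul]
      calc ‖g z.2‖ * ‖Q z.1 z.2‖ ≤ ‖g z.2‖ * (C_F * (2 * CK)) := by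
            refine mul_le_mul_of_nonneg_left ?_ (norm_nonneg _)
            rw [Real.norm_eq_abs]
            calc |Q z.1 z.2| ≤ |C_F| * (2 * CK) := hqbound C_F _ z.1 h1 z.2 h2
              _ = C_F * (2 * CK) := by rw [abs_of_pos hCFpos]
        _ = C_F * (2 * CK) * ‖g z.2‖ := mul_comm _ _
    calc (inner ℝ g (∫ ω, Φ ω ∂μF) : ℝ)
        = ∫ ω, (inner ℝ g (Φ ω) : ℝ) ∂μF := ((innerSL ℝ g).integral_comp_comm hΦint).symm
      _ = ∫ ω, ∫ y, g y * Q ω y ∂μB ∂μF := by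
          exact integral_congr_ae (Filter.Eventually.of_forall hinner)
      _ = ∫ y, ∫ ω, g y * Q ω y ∂μF ∂μB := integral_integral_swap hswap
      _ = ∫ y, g y * ∫ ω, Q ω y ∂μF ∂μB := by
          refine integral_congr_ae (Filter.Eventually.of_forall fun y => ?_)
          exact integral_const_mul _ _
      _ = ∫ y, g y * f y ∂μB := by
          refine integral_congr_ae ((ae_restrict_mem measurableSet_Icc).mono fun y hy => ?_)
          simp only [hkey y hy]
      _ = (inner ℝ g (hfmem.toLp f) : ℝ) := by
          rw [L2.inner_def]
          simp only [RCLike.inner_apply', starRingEnd_apply, star_trivial]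
          exact (integral_congr_ae (hfmem.coeFn_toLp.mono fun y hy => by simp only [hy])).symm
  set QQ : Set (Lp ℝ 2 μB) := {u | ∃ β : ℝ, ∃ ω' ∈ Ω, u = h (β, ω')} with hQQdef
  have hclosure : hfmem.toLp f ∈ closure (convexHull ℝ QQ) := by
    rw [← hIeq]
    refine (convex_convexHull ℝ QQ).closure.integral_mem isClosed_closure ?_ hΦint
    filter_upwards [hΩae] with ω hω
    exact subset_closure (subset_convexHull ℝ QQ ⟨Complex.arg (F' ω), ω, hω, rfl⟩)
  obtain ⟨u, huQ, hud⟩ := Metric.mem_closure_iff.mp hclosure ε hε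
  rw [_root_.convexHull_eq] at huQ
  obtain ⟨ι, t, w, z, hw0, hw1, hzQ, hcm⟩ := huQ
  have hz' : ∀ i : {y // y ∈ t}, ∃ β : ℝ, ∃ ωv : Fin d → ℝ, ωv ∈ Ω ∧ z ↑i = h (β, ωv) := by
    intro i
    obtain ⟨β, ωv, hωv, hh⟩ := hzQ i i.2
    exact ⟨β, ωv, hωv, hh⟩
  choose βf ωf hωmem hzeq using hz'
  set m := t.card with hm
  have e : {y // y ∈ t} ≃ Fin m :=
    (Fintype.equivFin _).trans (finCongr (Fintype.card_coe t))
  refine ⟨m, fun _ => C_F, fun j => βf (e.symm j), fun j => ωf (e.symm j),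
    fun j => w ↑(e.symm j), ?_, ?_, ?_, ?_, ?_⟩
  · intro j; rw [abs_of_pos hCFpos]
  · intro j; exact hωmem _
  · intro j; exact hw0 _ (e.symm j).2
  · rw [← hw1, ← Finset.sum_coe_sort t w]
    exact Equiv.sum_comp e.symm (fun i : {y // y ∈ t} => w ↑i)
  · set uL : Lp ℝ 2 μB :=
      ∑ j : Fin m, w ↑(e.symm j) • h (βf (e.symm j), ωf (e.symm j)) with huL
    have hueq : u = uL := by
      rw [← hcm, Finset.centerMass_eq_of_sum_1 _ _ hw1,
        ← Finset.sum_coe_sort t (fun i => w i • z i),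
        ← Equiv.sum_comp e.symm (fun i : {y // y ∈ t} => w ↑i • z ↑i)]
      exact Finset.sum_congr rfl fun j _ => by rw [hzeq]
    have h2 : ∀ j : Fin m, ⇑(w ↑(e.symm j) • h (βf (e.symm j), ωf (e.symm j)))
        =ᵐ[μB] fun x => w ↑(e.symm j) * (C_F *
          (Real.cos (βf (e.symm j)) * (K (∑ i, ωf (e.symm j) i * x i)).re
            - Real.sin (βf (e.symm j)) * (K (∑ i, ωf (e.symm j) i * x i)).im)) := by
      intro j
      filter_upwards [Lp.coeFn_smul (w ↑(e.symm j)) (h (βf (e.symm j), ωf (e.symm j))),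
        hcoe_h (βf (e.symm j), ωf (e.symm j))] with x hx1 hx2
      rw [hx1, Pi.smul_apply, smul_eq_mul, hx2]
    have h2' : ∀ᵐ x ∂μB, ∀ j : Fin m,
        ⇑(w ↑(e.symm j) • h (βf (e.symm j), ωf (e.symm j))) x = w ↑(e.symm j) * (C_F *
          (Real.cos (βf (e.symm j)) * (K (∑ i, ωf (e.symm j) i * x i)).re
            - Real.sin (βf (e.symm j)) * (K (∑ i, ωf (e.symm j) i * x i)).im)) :=
      ae_all_iff.mpr h2
    have hucoe : ⇑uL =ᵐ[μB] fun x => ∑ j : Fin m, w ↑(e.symm j) * (C_F *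
        (Real.cos (βf (e.symm j)) * (K (∑ i, ωf (e.symm j) i * x i)).re
          - Real.sin (βf (e.symm j)) * (K (∑ i, ωf (e.symm j) i * x i)).im)) := by
      filter_upwards [Lp_coeFn_sum Finset.univ
        (fun j : Fin m => w ↑(e.symm j) • h (βf (e.symm j), ωf (e.symm j))), h2'] with x hx1 hx2
      rw [huL, hx1]
      exact Finset.sum_congr rfl fun j _ => hx2 j
    have hfin : (fun x : Fin d → ℝ => f x - ∑ j : Fin m, w ↑(e.symm j) * (C_F *
        (Real.cos (βf (e.symm j)) * (K (∑ i, ωf (e.symm j) i * x i)).re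
          - Real.sin (βf (e.symm j)) * (K (∑ i, ωf (e.symm j) i * x i)).im)))
        =ᵐ[μB] (⇑(hfmem.toLp f) - ⇑uL) := by
      filter_upwards [hfmem.coeFn_toLp, hucoe] with x hx1 hx2
      rw [Pi.sub_apply, hx1, hx2]
    have hgoal : eLpNorm (fun x : Fin d → ℝ => f x - ∑ j : Fin m, w ↑(e.symm j) * (C_F *
        (Real.cos (βf (e.symm j)) * (K (∑ i, ωf (e.symm j) i * x i)).re
          - Real.sin (βf (e.symm j)) * (K (∑ i, ωf (e.symm j) i * x i)).im))) 2 μB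
        ≤ ENNReal.ofReal ε := by
      calc eLpNorm (fun x : Fin d → ℝ => f x - ∑ j : Fin m, w ↑(e.symm j) * (C_F *
          (Real.cos (βf (e.symm j)) * (K (∑ i, ωf (e.symm j) i * x i)).re
            - Real.sin (βf (e.symm j)) * (K (∑ i, ωf (e.symm j) i * x i)).im))) 2 μB
          = eLpNorm (⇑(hfmem.toLp f) - ⇑uL) 2 μB := eLpNorm_congr_ae hfin
        _ = edist (hfmem.toLp f) uL := (Lp.edist_def _ _).symm
        _ = ENNReal.ofReal (dist (hfmem.toLp f) uL) := edist_dist _ _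
        _ ≤ ENNReal.ofReal ε := ENNReal.ofReal_le_ofReal (by
            rw [← hueq]
            exact hud.le)
    exact hgoal
end

section
/- Let d ≥ 2, M ≥ 1, B = [0,1]^d, and let K : ℝ → ℂ be continuous with real part K_R and imaginary part K_I, satisfying |K(t)| ≤ D_K for all t ∈ [−dM, dM] for some constant D_K ∈ (0,1]. Let f ∈ H_{K,M}(B) be real-valued, with representing function F ∈ L²([−M,M]^d) ∩ L¹([−M,M]^d) satisfying f(x) = ∫_{[−M,M]^d} F(ω) K(ω·x) dω for all x ∈ B, and set C_F = ∫_{[−M,M]^d} |F(ω)| dω, assumed positive. Then for every ε₀ ∈ (0,1), with m = ⌈1/ε₀²⌉, there exist real coefficients b₁,…,b_m with Σ_{j=1}^m |b_j| ≤ C_F, reals β₁,…,β_m, and vectors ω₁,…,ω_m ∈ [−M,M]^d such that ‖f − Σ_{j=1}^m b_j·(cos(β_j)·K_R(ω_j·x) − sin(β_j)·K_I(ω_j·x))‖_{L²(B)} ≤ 2·C_F·ε₀. -/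
open Finset MeasureTheory
open scoped ENNReal NNReal

private lemma eLpNorm_two_le_of_integral_sq_le' {X : Type*} [MeasurableSpace X] {P : Measure X}
    [IsProbabilityMeasure P] {h : X → ℝ} (hm : AEStronglyMeasurable h P) {Cb c : ℝ}
    (hb : ∀ᵐ x ∂P, |h x| ≤ Cb) (hc : 0 ≤ c) (hI : ∫ x, (h x) ^ 2 ∂P ≤ c ^ 2) :
    eLpNorm h 2 P ≤ ENNReal.ofReal c := by
  have hmem : MemLp h 2 P :=
    MemLp.of_bound hm Cb (by simpa [Real.norm_eq_abs] using hb)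
  rw [hmem.eLpNorm_eq_integral_rpow_norm two_ne_zero ENNReal.ofNat_ne_top]
  apply ENNReal.ofReal_le_ofReal
  have htwo : (2 : ℝ≥0∞).toReal = (2 : ℝ) := by simp
  rw [htwo]
  have h2 : (∫ a, ‖h a‖ ^ (2:ℝ) ∂P) = ∫ a, (h a) ^ 2 ∂P := by
    refine integral_congr_ae (Filter.Eventually.of_forall fun x => ?_)
    show ‖h x‖ ^ (2:ℝ) = _
    rw [Real.rpow_two]
    simp [Real.norm_eq_abs, sq_abs]
  rw [h2]
  have hnn : 0 ≤ ∫ a, (h a) ^ 2 ∂P := integral_nonneg fun x => sq_nonneg _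
  calc (∫ a, (h a) ^ 2 ∂P) ^ (2:ℝ)⁻¹ ≤ (c ^ 2) ^ (2:ℝ)⁻¹ := by
        exact Real.rpow_le_rpow hnn hI (by norm_num)
    _ = c := Real.pow_rpow_inv_natCast hc two_ne_zero

private lemma complex_mul_re_arg (c z : ℂ) :
    (c * z).re = ‖c‖ * (Real.cos (Complex.arg c) * z.re
      - Real.sin (Complex.arg c) * z.im) := by
  conv_lhs => rw [← Complex.norm_mul_cos_add_sin_mul_I c]
  simp only [Complex.mul_re, Complex.add_re, Complex.add_im, Complex.mul_im,
    Complex.ofReal_re, Complex.ofReal_im, Complex.I_re, Complex.I_im,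
    Complex.cos_ofReal_re, Complex.cos_ofReal_im, Complex.sin_ofReal_re,
    Complex.sin_ofReal_im]
  ring

private lemma cos_re_sub_sin_im_le (β : ℝ) (z : ℂ) :
    |Real.cos β * z.re - Real.sin β * z.im| ≤ ‖z‖ := by
  have h1 : (Real.cos β * z.re - Real.sin β * z.im) ^ 2 ≤ ‖z‖ ^ 2 := by
    rw [Complex.sq_norm, Complex.normSq_apply]
    nlinarith [sq_nonneg (Real.sin β * z.re + Real.cos β * z.im), Real.sin_sq_add_cos_sq β]
  have h2 : (0:ℝ) ≤ ‖z‖ := norm_nonneg z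
  nlinarith [abs_nonneg (Real.cos β * z.re - Real.sin β * z.im),
    sq_abs (Real.cos β * z.re - Real.sin β * z.im)]


private lemma integrable_of_ae_bound' {X : Type*} [MeasurableSpace X] {P : Measure X}
    [IsFiniteMeasure P] {h : X → ℝ} (hm : AEStronglyMeasurable h P) {C : ℝ}
    (hb : ∀ᵐ x ∂P, |h x| ≤ C) : Integrable h P :=
  (integrable_const C).mono' hm (by simpa [Real.norm_eq_abs] using hb)

private lemma maurey {X : Type*} [MeasurableSpace X] (P : Measure X) [IsProbabilityMeasure P]
    {ι : Type*} [Fintype ι] [Nonempty ι] (a : ι → ℝ) (ha : ∀ k, 0 ≤ a k)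
    (φ : ι → X → ℝ) (hφm : ∀ k, Measurable (φ k)) (hφb : ∀ᵐ x ∂P, ∀ k, |φ k x| ≤ 1)
    (A : ℝ) (hA : A = ∑ k, a k) (hApos : 0 < A) (m : ℕ) (hm : 0 < m) :
    ∃ j : Fin m → ι, ∫ x, ((∑ k, a k * φ k x) - (A / m) * ∑ t, φ (j t) x) ^ 2 ∂P
      ≤ A ^ 2 / m := by
  have hg_meas : Measurable fun x => ∑ k, a k * φ k x :=
    Finset.measurable_sum _ fun k _ => (hφm k).const_mul _
  set g : X → ℝ := fun x => ∑ k, a k * φ k x with hgdef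
  have hgb : ∀ᵐ x ∂P, |g x| ≤ A := by
    filter_upwards [hφb] with x hx
    calc |g x| ≤ ∑ k, |a k * φ k x| := Finset.abs_sum_le_sum_abs _ _
      _ ≤ ∑ k, a k := Finset.sum_le_sum fun k _ => by
          rw [abs_mul, abs_of_nonneg (ha k)]
          nlinarith [hx k, ha k, abs_nonneg (φ k x)]
      _ = A := hA.symm
  have hbd_int : ∀ (h : X → ℝ) (C : ℝ), Measurable h → (∀ᵐ x ∂P, |h x| ≤ C) →
      Integrable h P := fun h C hm hb => integrable_of_ae_bound' hm.aestronglyMeasurable hb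
  have key : ∀ n : ℕ, ∃ j : Fin n → ι,
      ∫ x, ((∑ t, A * φ (j t) x) - n * g x) ^ 2 ∂P ≤ n * A ^ 2 := by
    intro n
    induction n with
    | zero => exact ⟨Fin.elim0, by simp⟩
    | succ n ih =>
      obtain ⟨j, hj⟩ := ih
      set u : X → ℝ := fun x => (∑ t, A * φ (j t) x) - n * g x with hudef
      have hum : Measurable u :=
        (Finset.measurable_sum _ fun t _ => (hφm (j t)).const_mul _).sub (hg_meas.const_mul _)
      have hub : ∀ᵐ x ∂P, |u x| ≤ n * A + n * A := by
        filter_upwards [hφb, hgb] with x hx hgx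
        have h1 : |∑ t, A * φ (j t) x| ≤ n * A := by
          calc |∑ t : Fin n, A * φ (j t) x| ≤ ∑ t : Fin n, |A * φ (j t) x| :=
                Finset.abs_sum_le_sum_abs _ _
            _ ≤ ∑ _t : Fin n, A := Finset.sum_le_sum fun t _ => by
                rw [abs_mul, abs_of_nonneg hApos.le]
                nlinarith [hx (j t), hApos]
            _ = n * A := by simp [mul_comm]
        have h2 : |(n : ℝ) * g x| ≤ n * A := by
          rw [abs_mul, abs_of_nonneg (by positivity : (0:ℝ) ≤ (n:ℝ))]
          have : (0:ℝ) ≤ (n:ℝ) := by positivity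
          nlinarith
        calc |u x| ≤ |∑ t, A * φ (j t) x| + |(n:ℝ) * g x| := abs_sub _ _
          _ ≤ n * A + n * A := add_le_add h1 h2
      set ψ : ι → X → ℝ := fun k x => u x + (A * φ k x - g x) with hψdef
      have hψm : ∀ k, Measurable (ψ k) := fun k =>
        hum.add (((hφm k).const_mul _).sub hg_meas)
      have hψb : ∀ k, ∀ᵐ x ∂P, |ψ k x| ≤ (n * A + n * A) + (A + A) := by
        intro k
        filter_upwards [hub, hφb, hgb] with x h1 h2 h3
        have : |A * φ k x| ≤ A := by
          rw [abs_mul, abs_of_nonneg hApos.le]; nlinarith [h2 k]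
        calc |ψ k x| ≤ |u x| + |A * φ k x - g x| := abs_add_le _ _
          _ ≤ |u x| + (|A * φ k x| + |g x|) := by gcongr; exact abs_sub _ _
          _ ≤ (n * A + n * A) + (A + A) := by gcongr
      have hψint : ∀ k, Integrable (fun x => (ψ k x) ^ 2) P := by
        intro k
        apply hbd_int _ ((((n : ℝ) * A + n * A) + (A + A)) ^ 2) ((hψm k).pow_const 2)
        filter_upwards [hψb k] with x hx
        simpa [abs_pow] using pow_le_pow_left₀ (abs_nonneg _) hx 2
      have huint : Integrable (fun x => (u x) ^ 2) P := by
        apply hbd_int _ (((n : ℝ) * A + n * A) ^ 2) (hum.pow_const 2)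
        filter_upwards [hub] with x hx
        simpa [abs_pow] using pow_le_pow_left₀ (abs_nonneg _) hx 2
      -- pointwise identity and bound
      have hterm : ∀ x k, a k * (ψ k x) ^ 2
          = a k * (u x - g x) ^ 2 + (2 * (u x - g x) * A) * (a k * φ k x)
            + A ^ 2 * (a k * (φ k x) ^ 2) := by
        intro x k; simp only [hψdef]; ring
      have hpt : ∀ᵐ x ∂P, ∑ k, a k * (ψ k x) ^ 2 ≤ A * (u x) ^ 2 + A ^ 2 * A := by
        filter_upwards [hφb] with x hx
        have hid : ∑ k, a k * (ψ k x) ^ 2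
            = A * (u x - g x) ^ 2 + (2 * (u x - g x) * A) * g x
              + A ^ 2 * (∑ k, a k * (φ k x) ^ 2) := by
          rw [Finset.sum_congr rfl fun k _ => hterm x k]
          rw [Finset.sum_add_distrib, Finset.sum_add_distrib, ← Finset.sum_mul,
            ← Finset.mul_sum, ← Finset.mul_sum, ← hA, hgdef]
        have hT : ∑ k, a k * (φ k x) ^ 2 ≤ A := by
          rw [hA]
          refine Finset.sum_le_sum fun k _ => ?_
          have h2 : φ k x ^ 2 ≤ 1 := by
            have h3 := abs_le.1 (hx k)
            nlinarith [h3.1, h3.2]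
          nlinarith [ha k, h2]
        rw [hid]
        have h1 : A ^ 2 * (∑ k, a k * (φ k x) ^ 2) ≤ A ^ 2 * A :=
          mul_le_mul_of_nonneg_left hT (sq_nonneg A)
        nlinarith [mul_nonneg hApos.le (sq_nonneg (g x))]
      have hsum_int : Integrable (fun x => ∑ k, a k * (ψ k x) ^ 2) P :=
        integrable_finset_sum _ fun k _ => ((hψint k).const_mul _)
      have hrhs_int : Integrable (fun x => A * (u x) ^ 2 + A ^ 2 * A) P :=
        (huint.const_mul A).add (integrable_const _)
      have hInt : ∑ k, a k * ∫ x, (ψ k x) ^ 2 ∂P ≤ A * (∫ x, (u x) ^ 2 ∂P) + A ^ 2 * A := by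
        have h1 := integral_mono_ae hsum_int hrhs_int hpt
        rw [integral_finset_sum _ (fun k _ => (hψint k).const_mul _)] at h1
        simp only [MeasureTheory.integral_const_mul] at h1
        rw [integral_add (huint.const_mul A) (integrable_const _), integral_const_mul,
          integral_const] at h1
        simpa using h1
      -- choose a good k
      have hex : ∃ k, ∫ x, (ψ k x) ^ 2 ∂P ≤ (∫ x, (u x) ^ 2 ∂P) + A ^ 2 := by
        by_contra hcon
        push_neg at hcon
        obtain ⟨k₀, hk₀⟩ : ∃ k, 0 < a k := by
          by_contra hall
          push_neg at hall
          have : ∑ k, a k = 0 := Finset.sum_eq_zero fun k _ => le_antisymm (hall k) (ha k)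
          rw [← hA] at this; exact hApos.ne' this
        have hlt : A * (∫ x, (u x) ^ 2 ∂P) + A ^ 2 * A < ∑ k, a k * ∫ x, (ψ k x) ^ 2 ∂P := by
          have heq : A * (∫ x, (u x) ^ 2 ∂P) + A ^ 2 * A
              = ∑ k, a k * ((∫ x, (u x) ^ 2 ∂P) + A ^ 2) := by
            rw [← Finset.sum_mul, ← hA]; ring
          rw [heq]
          refine Finset.sum_lt_sum (fun k _ => mul_le_mul_of_nonneg_left (hcon k).le (ha k))
            ⟨k₀, Finset.mem_univ _, mul_lt_mul_of_pos_left (hcon k₀) hk₀⟩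
        linarith
      obtain ⟨k, hk⟩ := hex
      refine ⟨Fin.snoc j k, ?_⟩
      have hfun : ∀ x, ((∑ t : Fin (n+1), A * φ ((Fin.snoc j k : Fin (n+1) → ι) t) x) - ((n:ℕ)+1 : ℕ) * g x) ^ 2
          = (ψ k x) ^ 2 := by
        intro x
        rw [Fin.sum_univ_castSucc]
        simp only [Fin.snoc_castSucc, Fin.snoc_last, hψdef, hudef]
        push_cast
        ring
      calc ∫ x, ((∑ t : Fin (n+1), A * φ ((Fin.snoc j k : Fin (n+1) → ι) t) x) - ((n+1 : ℕ) : ℝ) * g x) ^ 2 ∂P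
          = ∫ x, (ψ k x) ^ 2 ∂P := by
            refine integral_congr_ae (Filter.Eventually.of_forall fun x => ?_)
            exact_mod_cast hfun x
        _ ≤ (∫ x, (u x) ^ 2 ∂P) + A ^ 2 := hk
        _ ≤ n * A ^ 2 + A ^ 2 := by
            have hj' : ∫ x, (u x) ^ 2 ∂P ≤ n * A ^ 2 := by rw [hudef]; exact hj
            linarith
        _ = ((n+1 : ℕ) : ℝ) * A ^ 2 := by push_cast; ring
  obtain ⟨j, hj⟩ := key m
  refine ⟨j, ?_⟩
  have hmpos : (0:ℝ) < m := by exact_mod_cast hm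
  have hfun : ∀ x, ((∑ k, a k * φ k x) - (A / m) * ∑ t, φ (j t) x) ^ 2
      = ((m:ℝ)⁻¹) ^ 2 * ((∑ t, A * φ (j t) x) - m * g x) ^ 2 := by
    intro x
    rw [hgdef]
    have h1 : (∑ t, A * φ (j t) x) = A * ∑ t, φ (j t) x := by rw [Finset.mul_sum]
    rw [h1]
    field_simp
    ring
  calc ∫ x, ((∑ k, a k * φ k x) - (A / m) * ∑ t, φ (j t) x) ^ 2 ∂P
      = ∫ x, ((m:ℝ)⁻¹) ^ 2 * ((∑ t, A * φ (j t) x) - m * g x) ^ 2 ∂P :=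
        integral_congr_ae (Filter.Eventually.of_forall hfun)
    _ = ((m:ℝ)⁻¹) ^ 2 * ∫ x, ((∑ t, A * φ (j t) x) - m * g x) ^ 2 ∂P :=
        MeasureTheory.integral_const_mul _ _
    _ ≤ ((m:ℝ)⁻¹) ^ 2 * (m * A ^ 2) := by
        apply mul_le_mul_of_nonneg_left hj (by positivity)
    _ = A ^ 2 / m := by field_simp

private lemma exists_rounding (M δ : ℝ) (hM : 0 < M) (hδ : 0 < δ) :
    ∃ (n : ℕ) (_ : 0 < n) (q : ℝ → Fin n) (gp : Fin n → ℝ),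
      Measurable q ∧ (∀ i, gp i ∈ Set.Icc (-M) M) ∧
      (∀ t ∈ Set.Icc (-M) M, |gp (q t) - t| ≤ δ) := by
  set n : ℕ := ⌈2 * M / δ⌉₊ + 1 with hndef
  have hnpos : 0 < n := Nat.succ_pos _
  have hn0 : (0:ℝ) < (n:ℝ) := by exact_mod_cast hnpos
  have hnR : 2 * M / δ < (n:ℝ) := by
    refine lt_of_le_of_lt (Nat.le_ceil _) ?_
    exact_mod_cast Nat.lt_succ_self _
  set step : ℝ := 2 * M / (n:ℝ) with hstepdef
  have hsteppos : 0 < step := by positivity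
  have hstepδ : step ≤ δ := by
    rw [hstepdef, div_le_iff₀ hn0]
    have := (div_lt_iff₀ hδ).1 hnR
    nlinarith
  have hstepn : step * (n:ℝ) = 2 * M := by rw [hstepdef]; field_simp
  set outer : ℕ → Fin n := fun k => ⟨min k (n-1), lt_of_le_of_lt (min_le_right _ _) (Nat.sub_lt hnpos one_pos)⟩ with houterdef
  set q : ℝ → Fin n := fun t => outer ⌊(t + M) / step⌋₊ with hqdef
  set gp : Fin n → ℝ := fun i => -M + step * ((i : ℕ) : ℝ) with hgpdef
  have hqm : Measurable q := by
    have hcomp : q = outer ∘ fun t : ℝ => ⌊(t + M) / step⌋₊ := rfl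
    rw [hcomp]
    exact Measurable.of_discrete.comp
      (Nat.measurable_floor.comp ((measurable_id.add_const M).div_const step))
  refine ⟨n, hnpos, q, gp, hqm, ?_, ?_⟩
  · intro i
    have h1 : ((i : ℕ) : ℝ) ≤ (n:ℝ) - 1 := by
      have h2 : ((i : ℕ) : ℝ) + 1 ≤ (n:ℝ) := by exact_mod_cast Nat.succ_le_of_lt i.2
      linarith
    have h3 : (0:ℝ) ≤ ((i : ℕ) : ℝ) := by positivity
    constructor
    · have : 0 ≤ step * ((i:ℕ):ℝ) := mul_nonneg hsteppos.le h3
      rw [hgpdef]; dsimp only; linarith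
    · rw [hgpdef]; dsimp only
      nlinarith [mul_le_mul_of_nonneg_left h1 hsteppos.le]
  · intro t ht
    obtain ⟨h1, h2⟩ := Set.mem_Icc.1 ht
    set u : ℝ := (t + M) / step with hudef
    have hu0 : 0 ≤ u := div_nonneg (by linarith) hsteppos.le
    have hun : u ≤ (n:ℝ) := by
      rw [hudef, div_le_iff₀ hsteppos]
      nlinarith
    set jn : ℕ := min ⌊u⌋₊ (n-1) with hjndef
    have hqt : ((q t : Fin n) : ℕ) = jn := rfl
    have hj1 : ((jn : ℕ) : ℝ) ≤ u := by
      refine le_trans ?_ (Nat.floor_le hu0)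
      exact_mod_cast Nat.min_le_left _ _
    have hj2 : u ≤ ((jn : ℕ) : ℝ) + 1 := by
      rcases le_total (⌊u⌋₊) (n-1) with h | h
      · rw [hjndef, min_eq_left h]
        exact (Nat.lt_floor_add_one u).le
      · rw [hjndef, min_eq_right h]
        have hcast : ((n - 1 : ℕ) : ℝ) + 1 = (n:ℝ) := by
          have : (1:ℕ) ≤ n := hnpos
          push_cast [Nat.cast_sub this]
          ring
        linarith
    have hgpt : gp (q t) - t = step * (((jn:ℕ):ℝ) - u) := by
      have ht' : t = step * u - M := by rw [hudef]; field_simp; ring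
      have : gp (q t) = -M + step * ((jn:ℕ):ℝ) := rfl
      rw [this, ht']; ring
    rw [hgpt, abs_mul, abs_of_pos hsteppos]
    have habs : |((jn:ℕ):ℝ) - u| ≤ 1 := abs_le.2 ⟨by linarith, by linarith⟩
    nlinarith

set_option maxHeartbeats 2000000 in
/-- For a real-valued generalized bandlimited function `f ∈ H_{K,M}(B)` with representing
function `F ∈ L¹ ∩ L²([-M,M]^d)` and a kernel bounded by `D_K ∈ (0,1]` on `[-dM, dM]`:
for every `ε₀ ∈ (0,1)`, with `m = ⌈1/ε₀²⌉`, there are coefficients `b_j` with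
`∑ |b_j| ≤ C_F`, phases `β_j` and frequencies `ω_j ∈ [-M,M]^d` such that
`‖f - ∑_j b_j (cos β_j · K_R(ω_j·x) - sin β_j · K_I(ω_j·x))‖_{L²(B)} ≤ 2 C_F ε₀`. -/
theorem bandlimited_finite_convex_approximation
    (d : ℕ) (hd : 2 ≤ d) (M : ℝ) (hM : 1 ≤ M)
    (K : ℝ → ℂ) (hK : Continuous K)
    (D_K : ℝ) (hDK : D_K ∈ Set.Ioc (0 : ℝ) 1)
    (hKbd : ∀ t ∈ Set.Icc (-((d : ℝ) * M)) ((d : ℝ) * M), ‖K t‖ ≤ D_K)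
    (f : (Fin d → ℝ) → ℝ) (F : (Fin d → ℝ) → ℂ)
    (hF2 : MemLp F 2 (volume.restrict (Set.Icc (fun _ : Fin d => -M) (fun _ => M))))
    (hF1 : Integrable F (volume.restrict (Set.Icc (fun _ : Fin d => -M) (fun _ => M))))
    (hrep : ∀ x ∈ Set.Icc (0 : Fin d → ℝ) 1,
      (f x : ℂ) = ∫ ω in Set.Icc (fun _ : Fin d => -M) (fun _ => M),
        F ω * K (∑ i, ω i * x i))
    (C_F : ℝ)
    (hCF : C_F = ∫ ω in Set.Icc (fun _ : Fin d => -M) (fun _ => M), ‖F ω‖)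
    (hCFpos : 0 < C_F) :
    ∀ ε₀ ∈ Set.Ioo (0 : ℝ) 1,
      ∃ (b β : Fin ⌈1 / ε₀ ^ 2⌉₊ → ℝ) (ω : Fin ⌈1 / ε₀ ^ 2⌉₊ → Fin d → ℝ),
        (∑ j, |b j|) ≤ C_F ∧
        (∀ j, ω j ∈ Set.Icc (fun _ : Fin d => -M) (fun _ => M)) ∧
        eLpNorm (fun x : Fin d → ℝ => f x -
            ∑ j, b j *
              (Real.cos (β j) * (K (∑ i, ω j i * x i)).re
                - Real.sin (β j) * (K (∑ i, ω j i * x i)).im)) 2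
          (volume.restrict (Set.Icc (0 : Fin d → ℝ) 1))
          ≤ ENNReal.ofReal (2 * C_F * ε₀) := by
  intro ε₀ hε₀
  obtain ⟨hε₀pos, hε₀lt⟩ := hε₀
  have hMpos : (0:ℝ) < M := lt_of_lt_of_le one_pos hM
  have hdRpos : (0:ℝ) < (d:ℝ) := by
    have : 0 < d := lt_of_lt_of_le Nat.zero_lt_two hd
    exact_mod_cast this
  set Ω : Set (Fin d → ℝ) := Set.Icc (fun _ : Fin d => -M) (fun _ => M) with hΩdef
  set B : Set (Fin d → ℝ) := Set.Icc (0 : Fin d → ℝ) 1 with hBdef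
  have hΩmeas : MeasurableSet Ω := measurableSet_Icc
  have hBmeas : MeasurableSet B := measurableSet_Icc
  set ν : Measure (Fin d → ℝ) := volume.restrict Ω with hνdef
  set P : Measure (Fin d → ℝ) := volume.restrict B with hPdef
  haveI hPprob : IsProbabilityMeasure P := by
    constructor
    rw [hPdef, Measure.restrict_apply_univ, hBdef, Real.volume_Icc_pi]
    simp
  have hΩmem : ∀ ω ∈ Ω, ∀ i, -M ≤ ω i ∧ ω i ≤ M := by
    intro ω hω i
    rw [hΩdef, Set.mem_Icc] at hω
    exact ⟨hω.1 i, hω.2 i⟩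
  have hBmem : ∀ x ∈ B, ∀ i, 0 ≤ x i ∧ x i ≤ 1 := by
    intro x hx i
    rw [hBdef, Set.mem_Icc] at hx
    exact ⟨hx.1 i, hx.2 i⟩
  have hdot : ∀ ω ∈ Ω, ∀ x ∈ B, |∑ i, ω i * x i| ≤ (d:ℝ) * M := by
    intro ω hω x hx
    calc |∑ i, ω i * x i| ≤ ∑ i, |ω i * x i| := Finset.abs_sum_le_sum_abs _ _
      _ ≤ ∑ _i : Fin d, M := by
          refine Finset.sum_le_sum fun i _ => ?_
          rw [abs_mul]
          have h1 := hΩmem ω hω i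
          have h2 := hBmem x hx i
          have e1 : |ω i| ≤ M := abs_le.2 ⟨h1.1, h1.2⟩
          have e2 : |x i| ≤ 1 := abs_le.2 ⟨by linarith [h2.1], h2.2⟩
          calc |ω i| * |x i| ≤ M * 1 :=
                mul_le_mul e1 e2 (abs_nonneg _) hMpos.le
            _ = M := mul_one M
      _ = (d:ℝ) * M := by simp [mul_comm]
  -- uniform continuity of K on the compact interval
  have huc := (isCompact_Icc (a := -((d:ℝ)*M)) (b := (d:ℝ)*M)).uniformContinuousOn_of_continuous
    hK.continuousOn
  rw [Metric.uniformContinuousOn_iff] at huc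
  obtain ⟨δ, hδpos, hδK⟩ := huc ε₀ hε₀pos
  -- rounding grid
  obtain ⟨n, hnpos, q, gp, hqm, hgpmem, hqclose⟩ :=
    exists_rounding M (δ / (2 * (d:ℝ))) hMpos (by positivity)
  haveI : Nonempty (Fin n) := ⟨⟨0, hnpos⟩⟩
  set idx : (Fin d → ℝ) → (Fin d → Fin n) := fun ω i => q (ω i) with hidxdef
  have hidxm : Measurable idx :=
    measurable_pi_lambda _ fun i => hqm.comp (measurable_pi_apply i)
  set G : (Fin d → Fin n) → (Fin d → ℝ) := fun k i => gp (k i) with hGdef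
  have hGmem : ∀ k, G k ∈ Ω := by
    intro k
    rw [hΩdef, Set.mem_Icc]
    exact ⟨fun i => (hgpmem (k i)).1, fun i => (hgpmem (k i)).2⟩
  set S : (Fin d → Fin n) → Set (Fin d → ℝ) := fun k => idx ⁻¹' {k} with hSdef
  have hSmeas : ∀ k, MeasurableSet (S k) := fun k => hidxm (measurableSet_singleton k)
  have hSdisj : Pairwise (Function.onFun Disjoint S) := by
    intro k l hkl
    simp only [Function.onFun, hSdef]
    rw [Set.disjoint_left]
    rintro ω h1 h2
    rw [Set.mem_preimage, Set.mem_singleton_iff] at h1 h2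
    exact hkl (h1 ▸ h2 ▸ rfl)
  have hSunion : (⋃ k, S k) = Set.univ := by
    rw [Set.eq_univ_iff_forall]
    exact fun ω => Set.mem_iUnion.2 ⟨idx ω, rfl⟩
  set c : (Fin d → Fin n) → ℂ := fun k => ∫ ω in S k, F ω ∂ν with hcdef
  set a : (Fin d → Fin n) → ℝ := fun k => ‖c k‖ with hadef
  set A : ℝ := ∑ k, a k with hAdef
  have hFnorm_int : Integrable (fun ω => ‖F ω‖) ν := hF1.norm
  have hA_le : A ≤ C_F := by
    rw [hAdef, hCF]
    calc ∑ k, a k ≤ ∑ k, ∫ ω in S k, ‖F ω‖ ∂ν := by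
          refine Finset.sum_le_sum fun k _ => ?_
          calc a k = ‖∫ ω in S k, F ω ∂ν‖ := rfl
            _ ≤ ∫ ω in S k, ‖F ω‖ ∂ν := norm_integral_le_integral_norm _
      _ = ∫ ω in ⋃ k, S k, ‖F ω‖ ∂ν :=
          (integral_iUnion_fintype hSmeas hSdisj fun k => hFnorm_int.integrableOn).symm
      _ = ∫ ω, ‖F ω‖ ∂ν := by rw [hSunion, Measure.restrict_univ]
  set θ : (Fin d → Fin n) → (Fin d → ℝ) → ℝ := fun k x => ∑ i, G k i * x i with hθdef
  have hdotmem1 : ∀ ω ∈ Ω, ∀ x ∈ B,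
      (∑ i, ω i * x i) ∈ Set.Icc (-((d:ℝ)*M)) ((d:ℝ)*M) :=
    fun ω hω x hx => Set.mem_Icc.2 (abs_le.1 (hdot ω hω x hx))
  have hKmeasθ : ∀ k, Continuous fun x : Fin d → ℝ => K (θ k x) := by
    intro k
    exact hK.comp (continuous_finset_sum _ fun i _ => continuous_const.mul (continuous_apply i))
  have step1 : ∀ x ∈ B, ‖(f x : ℂ) - ∑ k, c k * K (θ k x)‖ ≤ C_F * ε₀ := by
    intro x hx
    have hmeas1 : AEStronglyMeasurable (fun ω => F ω * K (∑ i, ω i * x i)) ν := by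
      refine hF1.aestronglyMeasurable.mul (Continuous.aestronglyMeasurable ?_)
      exact hK.comp (continuous_finset_sum _ fun i _ => (continuous_apply i).mul continuous_const)
    have hmeas2 : AEStronglyMeasurable (fun ω => F ω * K (θ (idx ω) x)) ν := by
      refine hF1.aestronglyMeasurable.mul (Measurable.aestronglyMeasurable ?_)
      have hcomp : (fun ω => K (θ (idx ω) x)) = (fun k => K (θ k x)) ∘ idx := rfl
      rw [hcomp]
      exact Measurable.of_discrete.comp hidxm
    have hbound1 : ∀ᵐ ω ∂ν, ‖F ω * K (∑ i, ω i * x i)‖ ≤ ‖F ω‖ * D_K := by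
      filter_upwards [ae_restrict_mem hΩmeas] with ω hω
      rw [norm_mul]
      exact mul_le_mul_of_nonneg_left (hKbd _ (hdotmem1 ω hω x hx)) (norm_nonneg _)
    have hbound2 : ∀ᵐ ω ∂ν, ‖F ω * K (θ (idx ω) x)‖ ≤ ‖F ω‖ * D_K := by
      filter_upwards [ae_restrict_mem hΩmeas] with ω hω
      rw [norm_mul]
      exact mul_le_mul_of_nonneg_left (hKbd _ (hdotmem1 _ (hGmem _) x hx)) (norm_nonneg _)
    have hFD_int : Integrable (fun ω => ‖F ω‖ * D_K) ν := hFnorm_int.mul_const _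
    have hint1 : Integrable (fun ω => F ω * K (∑ i, ω i * x i)) ν :=
      hFD_int.mono' hmeas1 hbound1
    have hint2 : Integrable (fun ω => F ω * K (θ (idx ω) x)) ν :=
      hFD_int.mono' hmeas2 hbound2
    have hsplit : ∫ ω, F ω * K (θ (idx ω) x) ∂ν = ∑ k, c k * K (θ k x) := by
      conv_lhs => rw [← Measure.restrict_univ (μ := ν), ← hSunion]
      rw [integral_iUnion_fintype hSmeas hSdisj fun k => hint2.integrableOn]
      refine Finset.sum_congr rfl fun k _ => ?_
      have hEq : Set.EqOn (fun ω => F ω * K (θ (idx ω) x)) (fun ω => F ω * K (θ k x)) (S k) := by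
        intro ω hω
        rw [hSdef] at hω
        rw [Set.mem_preimage, Set.mem_singleton_iff] at hω
        simp only [hω]
      rw [setIntegral_congr_fun (hSmeas k) hEq, integral_mul_const]
    have hrepx := hrep x hx
    rw [hrepx, ← hsplit, ← integral_sub hint1 hint2]
    have hptbd : ∀ᵐ ω ∂ν,
        ‖F ω * K (∑ i, ω i * x i) - F ω * K (θ (idx ω) x)‖ ≤ ‖F ω‖ * ε₀ := by
      filter_upwards [ae_restrict_mem hΩmeas] with ω hω
      rw [← mul_sub, norm_mul]
      refine mul_le_mul_of_nonneg_left ?_ (norm_nonneg _)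
      have hdist : dist (∑ i, ω i * x i) (θ (idx ω) x) < δ := by
        rw [Real.dist_eq]
        have hbd : |∑ i, ω i * x i - θ (idx ω) x| ≤ (d:ℝ) * (δ / (2 * (d:ℝ))) := by
          have hsub : (∑ i, ω i * x i) - θ (idx ω) x
              = ∑ i, (ω i - G (idx ω) i) * x i := by
            rw [hθdef, ← Finset.sum_sub_distrib]
            exact Finset.sum_congr rfl fun i _ => by ring
          rw [hsub]
          calc |∑ i, (ω i - G (idx ω) i) * x i| ≤ ∑ i, |(ω i - G (idx ω) i) * x i| :=
                Finset.abs_sum_le_sum_abs _ _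
            _ ≤ ∑ _i : Fin d, δ / (2 * (d:ℝ)) := by
                refine Finset.sum_le_sum fun i _ => ?_
                rw [abs_mul]
                have h1 : |ω i - G (idx ω) i| ≤ δ / (2 * (d:ℝ)) := by
                  have hmem := hΩmem ω hω i
                  have := hqclose (ω i) (Set.mem_Icc.2 ⟨hmem.1, hmem.2⟩)
                  calc |ω i - G (idx ω) i| = |gp (q (ω i)) - ω i| := by
                        rw [abs_sub_comm]
                    _ ≤ δ / (2 * (d:ℝ)) := this
                have h2 := hBmem x hx i
                have e2 : |x i| ≤ 1 := abs_le.2 ⟨by linarith [h2.1], h2.2⟩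
                calc |ω i - G (idx ω) i| * |x i| ≤ (δ / (2 * (d:ℝ))) * 1 :=
                      mul_le_mul h1 e2 (abs_nonneg _) (by positivity)
                  _ = δ / (2 * (d:ℝ)) := mul_one _
            _ = (d:ℝ) * (δ / (2 * (d:ℝ))) := by simp [mul_comm]
        have hd0 : (d:ℝ) ≠ 0 := ne_of_gt hdRpos
        have heq : (d:ℝ) * (δ / (2 * (d:ℝ))) = δ / 2 := by
          field_simp
        rw [heq] at hbd
        linarith
      have := hδK _ (hdotmem1 ω hω x hx) _ (hdotmem1 _ (hGmem _) x hx) hdist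
      rw [dist_eq_norm] at this
      exact this.le
    calc ‖∫ ω, (F ω * K (∑ i, ω i * x i) - F ω * K (θ (idx ω) x)) ∂ν‖
        ≤ ∫ ω, ‖F ω‖ * ε₀ ∂ν :=
          norm_integral_le_of_norm_le (hFnorm_int.mul_const _) hptbd
      _ = (∫ ω, ‖F ω‖ ∂ν) * ε₀ := integral_mul_const _ _
      _ = C_F * ε₀ := by rw [hCF]
  set β' : (Fin d → Fin n) → ℝ := fun k => Complex.arg (c k) with hβdef
  set φ : (Fin d → Fin n) → (Fin d → ℝ) → ℝ := fun k x =>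
    Real.cos (β' k) * (K (θ k x)).re - Real.sin (β' k) * (K (θ k x)).im with hφdef
  have hφm : ∀ k, Measurable (φ k) := by
    intro k
    exact ((continuous_const.mul (Complex.continuous_re.comp (hKmeasθ k))).sub
      (continuous_const.mul (Complex.continuous_im.comp (hKmeasθ k)))).measurable
  have hφb : ∀ k, ∀ x ∈ B, |φ k x| ≤ 1 := by
    intro k x hx
    calc |φ k x| ≤ ‖K (θ k x)‖ := cos_re_sub_sin_im_le _ _
      _ ≤ D_K := hKbd _ (hdotmem1 _ (hGmem k) x hx)
      _ ≤ 1 := hDK.2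
  have hreal : ∀ x ∈ B, |f x - ∑ k, a k * φ k x| ≤ C_F * ε₀ := by
    intro x hx
    have h1 : (∑ k, c k * K (θ k x)).re = ∑ k, a k * φ k x := by
      rw [Complex.re_sum]
      exact Finset.sum_congr rfl fun k _ => complex_mul_re_arg (c k) (K (θ k x))
    have h2 : f x - ∑ k, a k * φ k x = ((f x : ℂ) - ∑ k, c k * K (θ k x)).re := by
      rw [Complex.sub_re, h1, Complex.ofReal_re]
    rw [h2]
    exact le_trans (Complex.abs_re_le_norm _) (step1 x hx)
  have hCFε : (0:ℝ) ≤ C_F * ε₀ := by positivity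
  have hAnonneg : 0 ≤ A := hAdef ▸ Finset.sum_nonneg fun k _ => norm_nonneg _
  have hmpos : 0 < ⌈1 / ε₀ ^ 2⌉₊ := Nat.ceil_pos.2 (by positivity)
  have hm_ge : 1 / ε₀ ^ 2 ≤ (⌈1 / ε₀ ^ 2⌉₊ : ℝ) := Nat.le_ceil _
  rcases eq_or_lt_of_le hAnonneg with hA0 | hApos
  · -- degenerate case: the discretized function is zero
    refine ⟨0, 0, fun _ _ => 0, by simpa using hCFpos.le, ?_, ?_⟩
    · intro j
      rw [hΩdef, Set.mem_Icc]
      constructor <;> intro i <;> simp <;> linarith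
    · have hak : ∀ k, a k = 0 := by
        intro k
        have := (Finset.sum_eq_zero_iff_of_nonneg
          (fun k _ => norm_nonneg (c k))).1 (hAdef ▸ hA0.symm)
        exact this k (Finset.mem_univ k)
      have hfb : ∀ᵐ x ∂P, ‖f x‖ ≤ C_F * ε₀ := by
        filter_upwards [ae_restrict_mem hBmeas] with x hx
        have h := hreal x hx
        rw [Real.norm_eq_abs]
        calc |f x| = |f x - ∑ k, a k * φ k x| := by simp [hak]
          _ ≤ C_F * ε₀ := h
      have hgoal : (fun x : Fin d → ℝ => f x -
          ∑ j : Fin ⌈1 / ε₀ ^ 2⌉₊, (0:Fin ⌈1 / ε₀ ^ 2⌉₊ → ℝ) j *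
            (Real.cos ((0:Fin ⌈1 / ε₀ ^ 2⌉₊ → ℝ) j) * (K (∑ i, (0:ℝ) * x i)).re
              - Real.sin ((0:Fin ⌈1 / ε₀ ^ 2⌉₊ → ℝ) j) * (K (∑ i, (0:ℝ) * x i)).im)) = f := by
        funext x
        simp
      rw [hgoal]
      calc eLpNorm f 2 P ≤ P Set.univ ^ (2:ℝ≥0∞).toReal⁻¹ * ENNReal.ofReal (C_F * ε₀) :=
            eLpNorm_le_of_ae_bound hfb
        _ = ENNReal.ofReal (C_F * ε₀) := by
            rw [measure_univ]
            simp
        _ ≤ ENNReal.ofReal (2 * C_F * ε₀) := by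
            apply ENNReal.ofReal_le_ofReal
            nlinarith
  · -- main case
    -- measurability of f on B via a continuous representative
    set proj : (Fin d → ℝ) → (Fin d → ℝ) := fun x i => max 0 (min 1 (x i)) with hprojdef
    have hprojcont : Continuous proj :=
      continuous_pi fun i => continuous_const.max (continuous_const.min (continuous_apply i))
    have hprojmem : ∀ x, proj x ∈ B := by
      intro x
      rw [hBdef, Set.mem_Icc]
      constructor <;> intro i
      · exact le_max_left _ _
      · exact max_le (by norm_num) (min_le_left _ _)
    have hprojid : ∀ x ∈ B, proj x = x := by
      intro x hx
      funext i
      have h := hBmem x hx i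
      rw [hprojdef]
      dsimp only
      rw [min_eq_right h.2, max_eq_right h.1]
    have hFD_int : Integrable (fun ω => ‖F ω‖ * D_K) ν := hFnorm_int.mul_const _
    have hfc : Continuous fun x : Fin d → ℝ =>
        (∫ ω, F ω * K (∑ i, ω i * proj x i) ∂ν).re := by
      apply Complex.continuous_re.comp
      apply MeasureTheory.continuous_of_dominated (bound := fun ω => ‖F ω‖ * D_K)
      · intro x
        refine hF1.aestronglyMeasurable.mul (Continuous.aestronglyMeasurable ?_)
        exact hK.comp
          (continuous_finset_sum _ fun i _ => (continuous_apply i).mul continuous_const)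
      · intro x
        filter_upwards [ae_restrict_mem hΩmeas] with ω hω
        rw [norm_mul]
        exact mul_le_mul_of_nonneg_left
          (hKbd _ (hdotmem1 ω hω _ (hprojmem x))) (norm_nonneg _)
      · exact hFD_int
      · refine Filter.Eventually.of_forall fun ω => ?_
        refine continuous_const.mul (hK.comp ?_)
        exact continuous_finset_sum _ fun i _ =>
          continuous_const.mul ((continuous_apply i).comp hprojcont)
    have hfaem : AEStronglyMeasurable f P := by
      refine hfc.aestronglyMeasurable.congr ?_
      filter_upwards [ae_restrict_mem hBmeas] with x hx
      rw [hprojid x hx]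
      exact (congrArg Complex.re (hrep x hx)).symm
    have hφbae : ∀ᵐ x ∂P, ∀ k, |φ k x| ≤ 1 := by
      filter_upwards [ae_restrict_mem hBmeas] with x hx k
      exact hφb k x hx
    obtain ⟨j, hj⟩ := maurey P a (fun k => norm_nonneg _) φ hφm hφbae A hAdef hApos
      ⌈1 / ε₀ ^ 2⌉₊ hmpos
    have hmR : (0:ℝ) < (⌈1 / ε₀ ^ 2⌉₊ : ℝ) := by exact_mod_cast hmpos
    refine ⟨fun _ => A / (⌈1 / ε₀ ^ 2⌉₊ : ℝ), fun t => β' (j t), fun t => G (j t), ?_,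
      fun t => hGmem (j t), ?_⟩
    · have habs : |A / (⌈1 / ε₀ ^ 2⌉₊ : ℝ)| = A / (⌈1 / ε₀ ^ 2⌉₊ : ℝ) :=
        abs_of_nonneg (div_nonneg hApos.le hmR.le)
      calc (∑ _j : Fin ⌈1 / ε₀ ^ 2⌉₊, |A / (⌈1 / ε₀ ^ 2⌉₊ : ℝ)|)
          = (⌈1 / ε₀ ^ 2⌉₊ : ℝ) * (A / (⌈1 / ε₀ ^ 2⌉₊ : ℝ)) := by
            rw [Finset.sum_const, Finset.card_univ, Fintype.card_fin, nsmul_eq_mul, habs]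
        _ = A := by field_simp
        _ ≤ C_F := hA_le
    · have hgm : Measurable fun x => ∑ k, a k * φ k x :=
        Finset.measurable_sum _ fun k _ => (hφm k).const_mul _
      have happrm : Measurable fun x =>
          (A / (⌈1 / ε₀ ^ 2⌉₊ : ℝ)) * ∑ t, φ (j t) x :=
        (Finset.measurable_sum _ fun t _ => hφm (j t)).const_mul _
      have hgoalfun : (fun x : Fin d → ℝ => f x -
            ∑ t : Fin ⌈1 / ε₀ ^ 2⌉₊, A / (⌈1 / ε₀ ^ 2⌉₊ : ℝ) *
              (Real.cos (β' (j t)) * (K (∑ i, G (j t) i * x i)).re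
                - Real.sin (β' (j t)) * (K (∑ i, G (j t) i * x i)).im))
          = (fun x => f x - ∑ k, a k * φ k x)
            + fun x => (∑ k, a k * φ k x)
              - (A / (⌈1 / ε₀ ^ 2⌉₊ : ℝ)) * ∑ t, φ (j t) x := by
        funext x
        simp only [Pi.add_apply, hφdef, Finset.mul_sum]
        ring
      rw [hgoalfun]
      have hfirst : eLpNorm (fun x => f x - ∑ k, a k * φ k x) 2 P
          ≤ ENNReal.ofReal (C_F * ε₀) := by
        have hb : ∀ᵐ x ∂P, ‖f x - ∑ k, a k * φ k x‖ ≤ C_F * ε₀ := by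
          filter_upwards [ae_restrict_mem hBmeas] with x hx
          rw [Real.norm_eq_abs]
          exact hreal x hx
        calc eLpNorm (fun x => f x - ∑ k, a k * φ k x) 2 P
            ≤ P Set.univ ^ (2:ℝ≥0∞).toReal⁻¹ * ENNReal.ofReal (C_F * ε₀) :=
              eLpNorm_le_of_ae_bound hb
          _ = ENNReal.ofReal (C_F * ε₀) := by rw [measure_univ]; simp
      have hsecond : eLpNorm (fun x => (∑ k, a k * φ k x)
          - (A / (⌈1 / ε₀ ^ 2⌉₊ : ℝ)) * ∑ t, φ (j t) x) 2 P
          ≤ ENNReal.ofReal (C_F * ε₀) := by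
        refine eLpNorm_two_le_of_integral_sq_le'
          ((hgm.sub happrm).aestronglyMeasurable) (Cb := A + A) ?_ hCFε ?_
        · filter_upwards [hφbae] with x hx
          have hg1 : |∑ k, a k * φ k x| ≤ A := by
            calc |∑ k, a k * φ k x| ≤ ∑ k, |a k * φ k x| := Finset.abs_sum_le_sum_abs _ _
              _ ≤ ∑ k, a k := by
                  refine Finset.sum_le_sum fun k _ => ?_
                  rw [abs_mul, abs_of_nonneg (norm_nonneg _)]
                  nlinarith [hx k, norm_nonneg (c k), abs_nonneg (φ k x)]
              _ = A := hAdef.symm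
          have hg2 : |(A / (⌈1 / ε₀ ^ 2⌉₊ : ℝ)) * ∑ t, φ (j t) x| ≤ A := by
            rw [abs_mul, abs_of_nonneg (div_nonneg hApos.le hmR.le)]
            have hs : |∑ t, φ (j t) x| ≤ (⌈1 / ε₀ ^ 2⌉₊ : ℝ) := by
              calc |∑ t, φ (j t) x| ≤ ∑ t, |φ (j t) x| := Finset.abs_sum_le_sum_abs _ _
                _ ≤ ∑ _t : Fin ⌈1 / ε₀ ^ 2⌉₊, (1:ℝ) :=
                    Finset.sum_le_sum fun t _ => hx (j t)
                _ = (⌈1 / ε₀ ^ 2⌉₊ : ℝ) := by simp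
            calc A / (⌈1 / ε₀ ^ 2⌉₊ : ℝ) * |∑ t, φ (j t) x|
                ≤ A / (⌈1 / ε₀ ^ 2⌉₊ : ℝ) * (⌈1 / ε₀ ^ 2⌉₊ : ℝ) :=
                  mul_le_mul_of_nonneg_left hs (div_nonneg hApos.le hmR.le)
              _ = A := by field_simp
          calc |(∑ k, a k * φ k x) - (A / (⌈1 / ε₀ ^ 2⌉₊ : ℝ)) * ∑ t, φ (j t) x|
              ≤ |∑ k, a k * φ k x| + |(A / (⌈1 / ε₀ ^ 2⌉₊ : ℝ)) * ∑ t, φ (j t) x| :=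
                abs_sub _ _
            _ ≤ A + A := add_le_add hg1 hg2
        · calc ∫ x, ((∑ k, a k * φ k x)
              - (A / (⌈1 / ε₀ ^ 2⌉₊ : ℝ)) * ∑ t, φ (j t) x) ^ 2 ∂P
              ≤ A ^ 2 / (⌈1 / ε₀ ^ 2⌉₊ : ℝ) := hj
            _ ≤ (C_F * ε₀) ^ 2 := by
                rw [div_le_iff₀ hmR]
                have h1 : A ^ 2 ≤ C_F ^ 2 := by nlinarith
                have h2 : 1 ≤ (⌈1 / ε₀ ^ 2⌉₊ : ℝ) * ε₀ ^ 2 := by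
                  have hε2 : (0:ℝ) < ε₀ ^ 2 := by positivity
                  calc (1:ℝ) = (1 / ε₀ ^ 2) * ε₀ ^ 2 := by field_simp
                    _ ≤ (⌈1 / ε₀ ^ 2⌉₊ : ℝ) * ε₀ ^ 2 :=
                      mul_le_mul_of_nonneg_right hm_ge hε2.le
                nlinarith [sq_nonneg C_F, sq_nonneg ε₀, hCFpos]
      calc eLpNorm ((fun x => f x - ∑ k, a k * φ k x)
            + fun x => (∑ k, a k * φ k x)
              - (A / (⌈1 / ε₀ ^ 2⌉₊ : ℝ)) * ∑ t, φ (j t) x) 2 P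
          ≤ eLpNorm (fun x => f x - ∑ k, a k * φ k x) 2 P
            + eLpNorm (fun x => (∑ k, a k * φ k x)
              - (A / (⌈1 / ε₀ ^ 2⌉₊ : ℝ)) * ∑ t, φ (j t) x) 2 P :=
            eLpNorm_add_le (hfaem.sub hgm.aestronglyMeasurable)
              (hgm.sub happrm).aestronglyMeasurable one_le_two
        _ ≤ ENNReal.ofReal (C_F * ε₀) + ENNReal.ofReal (C_F * ε₀) :=
            add_le_add hfirst hsecond
        _ = ENNReal.ofReal (2 * C_F * ε₀) := by
            rw [← ENNReal.ofReal_add hCFε hCFε]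
            ring_nf
end
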